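/- arXiv:1807.11425 — 4 statements merged into one kernel-verified Lean document; each statement's English description precedes it below -/
import Mathlib

section
/- There is no star-algebra automorphism β of the C*-algebra C = C(𝕋, ℂ) × M₂(ℂ) satisfying β(a) = (the restriction of φ to 𝕋, K), where a = (z ↦ z, N). (This is the concrete content of the paper's Proposition: the C*-cover (C, ι) of the disc algebra given by ι(f) = (f|_𝕋, f(N)) is not admissible for the dynamical system generated by composition with the Möbius map φ; hence not all C*-covers of an operator algebra dynamical system are α-admissible.) -/
noncomputable section

/-- The unit circle in `ℂ`. -/
abbrev 𝕋 : Set ℂ := Metric.sphere (0 : ℂ) 1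

/-- The C*-cover `C = C(𝕋, ℂ) × M₂(ℂ)` of the disc algebra from the paper. -/
abbrev CstarCover : Type := C(𝕋, ℂ) × Matrix (Fin 2) (Fin 2) ℂ

/-- The nilpotent matrix `N` with `N₂₁ = 1` and all other entries `0`. -/
def N : Matrix (Fin 2) (Fin 2) ℂ := !![0, 0; 1, 0]

/-- The matrix `K = ι(φ(z))`'s matrix coordinate in the paper. -/
def K : Matrix (Fin 2) (Fin 2) ℂ := !![-(1/2), 0; 3/4, -(1/2)]

/-- The Möbius transformation `φ(z) = (z - 1/2)/(1 - z/2)`. -/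
def φ (z : ℂ) : ℂ := (z - 1/2) / (1 - z/2)

lemma denom_ne_zero (z : 𝕋) : (1 : ℂ) - (z : ℂ) / 2 ≠ 0 := by
  have hz : ‖(z : ℂ)‖ = 1 := by
    simpa using mem_sphere_iff_norm.mp z.2
  
  intro h
  have h2 : (z : ℂ) = 2 := by
    field_simp at h
    linear_combination -h
  rw [h2] at hz
  norm_num at hz

/-- The identity function `z ↦ z` as an element of `C(𝕋, ℂ)`. -/
def idT : C(𝕋, ℂ) := ⟨fun z => (z : ℂ), continuous_subtype_val⟩

/-- The restriction of `φ` to the unit circle, as an element of `C(𝕋, ℂ)`. -/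
def φT : C(𝕋, ℂ) :=
  ⟨fun z => φ (z : ℂ), by
    unfold φ
    exact ((continuous_subtype_val.sub continuous_const).div
      (continuous_const.sub (continuous_subtype_val.div_const 2))
      fun z => denom_ne_zero z)⟩

/-- The element `a = (z ↦ z, N)` of the C*-cover `C`. -/
def a : CstarCover := (idT, N)

/-- The diagonal matrix `diag(-1, 1)`. -/
def Dmat : Matrix (Fin 2) (Fin 2) ℂ := !![-1, 0; 0, 1]

lemma Dmat_sq : Dmat ^ 2 = 1 := by
  rw [sq]
  ext i j
  fin_cases i <;> fin_cases j <;>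
    simp [Dmat, Matrix.mul_apply, Fin.sum_univ_two, Matrix.one_apply]

lemma N_comm : N * star N - star N * N = Dmat := by
  ext i j
  fin_cases i <;> fin_cases j <;>
    simp [N, Dmat, Matrix.star_eq_conjTranspose, Matrix.mul_apply, Fin.sum_univ_two,
      Matrix.conjTranspose_apply, Matrix.vecMul, dotProduct]

lemma K_comm : K * star K - star K * K = (9/16 : ℂ) • Dmat := by
  ext i j
  fin_cases i <;> fin_cases j <;>
    simp [K, Dmat, Matrix.star_eq_conjTranspose, Matrix.mul_apply, Fin.sum_univ_two,
      Matrix.conjTranspose_apply, Matrix.vecMul, dotProduct,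
      ← Complex.ofReal_ofNat, ← Complex.ofReal_one] <;>
    norm_num [Complex.ext_iff]

/-- There is no star-algebra automorphism `β` of `C = C(𝕋, ℂ) × M₂(ℂ)` with
`β(a) = (φ|_𝕋, K)`; hence the C*-cover `(C, ι)` of the disc algebra is not
`α`-admissible for the dynamical system generated by composition with `φ`. -/
theorem no_admissible_automorphism :
    ¬ ∃ β : CstarCover ≃⋆ₐ[ℂ] CstarCover, β a = (φT, K) := by
  rintro ⟨β, hβ⟩
  set e : CstarCover := a * star a - star a * a with he
  have he' : e = ((0 : C(𝕋, ℂ)), Dmat) := by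
    rw [he]
    refine Prod.ext ?_ ?_
    · show idT * star idT - star idT * idT = 0
      rw [mul_comm, sub_self]
    · exact N_comm
  have h1 : e ^ 4 = e ^ 2 := by
    rw [he']
    refine Prod.ext (by simp) ?_
    show Dmat ^ 4 = Dmat ^ 2
    rw [show (4 : ℕ) = 2 * 2 by norm_num, pow_mul, Dmat_sq, one_pow]
  have h3 : β e = ((0 : C(𝕋, ℂ)), (9/16 : ℂ) • Dmat) := by
    rw [he, map_sub, map_mul, map_mul, map_star, hβ]
    refine Prod.ext ?_ ?_
    · show φT * star φT - star φT * φT = 0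
      rw [mul_comm, sub_self]
    · exact K_comm
  have h2 : (β e) ^ 4 = (β e) ^ 2 := by rw [← map_pow, ← map_pow, h1]
  rw [h3] at h2
  have h4 := congrArg Prod.snd h2
  simp only [Prod.pow_snd, smul_pow] at h4
  have h5 := congrFun (congrFun h4 0) 0
  simp [Dmat, Matrix.smul_apply, pow_succ, Matrix.mul_apply, Fin.sum_univ_two] at h5
  norm_num at h5



end
end

section
/- For every polynomial p ∈ ℂ[X], the norm in C of the element (the restriction of the polynomial function p to 𝕋, c₀·I₂ + c₁·N) equals sup_{z ∈ 𝕋} |p(z)|, where c₀ and c₁ are the coefficients of degree 0 and 1 of p and I₂ is the 2×2 identity matrix. (Note that c₀·I₂ + c₁·N = p(N) since N² = 0; the inequality ‖p(N)‖ ≤ sup_{z ∈ 𝕋} |p(z)| is the instance of von Neumann's inequality by which the paper shows that the embedding ι of the disc algebra into C is isometric.) -/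
open scoped Matrix.Norms.L2Operator

noncomputable section

/-- The restriction of a polynomial function to the unit circle, in `C(𝕋, ℂ)`. -/
def polyT (p : Polynomial ℂ) : C(𝕋, ℂ) :=
  ⟨fun z => p.eval (z : ℂ), p.continuous.comp continuous_subtype_val⟩

/-!
Only the matrix coordinate needs an argument, namely von Neumann's inequality
`‖p(N)‖ ≤ sup_𝕋 |p|`. For `x ∈ ℂ²` put `q = x₀ + x₁ X`: the coordinates of `p(N) x` are the
coefficients of degree `0` and `1` of `p q`, and `‖x‖²` is the sum of the squared moduli of the
coefficients of `q`. By the discrete Parseval identity at the `m`-th roots of unity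
(`m > deg (p q)`), the sum of the squared moduli of the coefficients of `p q` is the mean of
`|p q|²` over those roots, which is at most `(sup_𝕋 |p|)²` times the same mean for `q`.
-/

open Polynomial Finset ComplexConjugate

namespace IsPrimitiveRoot

variable {ζ : ℂ} {m : ℕ}

lemma sum_pow_mul_conj_pow (hζ : IsPrimitiveRoot ζ m) {k l : ℕ} (hk : k < m) (hl : l < m) :
    ∑ j ∈ range m, (ζ ^ j) ^ k * conj ((ζ ^ j) ^ l) = if k = l then (m : ℂ) else 0 := by
  have hm : m ≠ 0 := by omega
  have hζ0 : ζ ≠ 0 := hζ.ne_zero hm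
  have hconj : conj (ζ ^ l) = (ζ ^ l)⁻¹ :=
    (Complex.inv_eq_conj (by rw [norm_pow, hζ.norm'_eq_one hm, one_pow])).symm
  set w := ζ ^ k * (ζ ^ l)⁻¹
  have hterm (j : ℕ) : (ζ ^ j) ^ k * conj ((ζ ^ j) ^ l) = w ^ j := by
    rw [pow_right_comm, pow_right_comm ζ j l, map_pow, hconj, mul_pow]
  simp_rw [hterm]
  split_ifs with hkl
  · subst hkl
    simp [w, hζ0]
  · have hw1 : w ≠ 1 := fun h =>
      hkl (hζ.pow_inj hk hl (mul_inv_eq_one₀ (pow_ne_zero _ hζ0) |>.1 h))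
    have hwm : w ^ m = 1 := by
      simp [w, mul_pow, inv_pow, pow_right_comm _ _ m, hζ.pow_eq_one]
    rw [geom_sum_eq hw1, hwm, sub_self, zero_div]

lemma sum_norm_sq_eval_pow (hζ : IsPrimitiveRoot ζ m) {f : ℂ[X]} (hf : f.natDegree < m) :
    ∑ j ∈ range m, ‖f.eval (ζ ^ j)‖ ^ 2 = m * f.sum fun _ a => ‖a‖ ^ 2 := by
  rw [f.sum_over_range' (by simp) m hf]
  apply Complex.ofReal_injective
  push_cast
  simp_rw [← Complex.mul_conj', eval_eq_sum_range' hf, map_sum, sum_mul_sum]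
  calc ∑ j ∈ range m, ∑ k ∈ range m, ∑ l ∈ range m,
          f.coeff k * (ζ ^ j) ^ k * conj (f.coeff l * (ζ ^ j) ^ l)
      = ∑ k ∈ range m, ∑ l ∈ range m,
          f.coeff k * conj (f.coeff l) * ∑ j ∈ range m, (ζ ^ j) ^ k * conj ((ζ ^ j) ^ l) := by
        rw [sum_comm]
        refine sum_congr rfl fun k _ => ?_
        rw [sum_comm]
        simp_rw [mul_sum]
        exact sum_congr rfl fun l _ => sum_congr rfl fun j _ => by rw [map_mul]; ring
    _ = ∑ k ∈ range m, m * (f.coeff k * conj (f.coeff k)) := by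
        refine sum_congr rfl fun k hk => ?_
        rw [sum_congr rfl fun l hl => by
          rw [hζ.sum_pow_mul_conj_pow (mem_range.1 hk) (mem_range.1 hl)]]
        simp [hk, mul_comm]
    _ = _ := by rw [mul_sum]

end IsPrimitiveRoot

lemma Polynomial.sum_norm_sq_coeff_mul_le {p q : ℂ[X]} {M : ℝ}
    (hM : ∀ z : ℂ, ‖z‖ = 1 → ‖p.eval z‖ ≤ M) :
    ((p * q).sum fun _ a => ‖a‖ ^ 2) ≤ M ^ 2 * q.sum fun _ a => ‖a‖ ^ 2 := by
  set m := (p * q).natDegree + q.natDegree + 1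
  have hζ := Complex.isPrimitiveRoot_exp m (by omega)
  refine le_of_mul_le_mul_left ?_ (by positivity : (0 : ℝ) < m)
  rw [← hζ.sum_norm_sq_eval_pow (by omega), mul_left_comm, ← hζ.sum_norm_sq_eval_pow (by omega),
    mul_sum]
  gcongr with j
  rw [eval_mul, norm_mul, mul_pow]
  gcongr
  exact hM _ (by rw [norm_pow, hζ.norm'_eq_one (by omega), one_pow])

lemma norm_coeff_smul_one_add_coeff_smul_N_le (p : ℂ[X]) {M : ℝ}
    (hM : ∀ z : ℂ, ‖z‖ = 1 → ‖p.eval z‖ ≤ M) :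
    ‖p.coeff 0 • (1 : Matrix (Fin 2) (Fin 2) ℂ) + p.coeff 1 • N‖ ≤ M := by
  have hM0 : 0 ≤ M := (norm_nonneg _).trans (hM 1 norm_one)
  rw [Matrix.l2_opNorm_def]
  refine ContinuousLinearMap.opNorm_le_bound _ hM0 fun x => ?_
  set q : ℂ[X] := C (x 1) * X + C (x 0)
  have hq : q.natDegree < 2 := natDegree_linear_le.trans_lt one_lt_two
  have hcoeff (i : Fin 2) :
      Matrix.mulVec (p.coeff 0 • (1 : Matrix (Fin 2) (Fin 2) ℂ) + p.coeff 1 • N) x i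
        = (p * q).coeff i := by
    fin_cases i
    · simp [q, N, Matrix.mulVec, dotProduct, Fin.sum_univ_two, mul_coeff_zero]
    · simp [q, N, Matrix.mulVec, dotProduct, Fin.sum_univ_two, coeff_mul,
        Nat.sum_antidiagonal_succ, add_comm]
  have hx (i : Fin 2) : x i = q.coeff i := by fin_cases i <;> simp [q]
  refine (pow_le_pow_iff_left₀ (norm_nonneg _) (by positivity) two_ne_zero).1 ?_
  calc _ = ∑ i : Fin 2, ‖(p * q).coeff i‖ ^ 2 := by
        rw [EuclideanSpace.norm_sq_eq]
        simp_rw [← hcoeff]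
        rfl
    _ ≤ (p * q).sum fun _ a => ‖a‖ ^ 2 := by
        rw [sum_over_range' _ (by simp) ((p * q).natDegree + 2) (by omega),
          Fin.sum_univ_eq_sum_range (fun i => ‖(p * q).coeff i‖ ^ 2)]
        exact sum_le_sum_of_subset_of_nonneg (range_subset_range.2 (by omega))
          fun _ _ _ => by positivity
    _ ≤ M ^ 2 * q.sum fun _ a => ‖a‖ ^ 2 := sum_norm_sq_coeff_mul_le hM
    _ = (M * ‖x‖) ^ 2 := by
        rw [sum_over_range' _ (by simp) 2 hq, mul_pow, EuclideanSpace.norm_sq_eq,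
          ← Fin.sum_univ_eq_sum_range (fun i => ‖q.coeff i‖ ^ 2)]
        simp_rw [hx]

/-- von Neumann's inequality instance used in the paper: for any polynomial `p`, the norm of
`(p|_𝕋, p(N)) = (p|_𝕋, c₀·I + c₁·N)` in `C(𝕋, ℂ) × M₂(ℂ)` equals `sup_{z ∈ 𝕋} |p(z)|`. -/
theorem norm_iota_poly (p : Polynomial ℂ) :
    ‖((polyT p, p.coeff 0 • (1 : Matrix (Fin 2) (Fin 2) ℂ) + p.coeff 1 • N) : CstarCover)‖
      = ⨆ z : 𝕋, ‖p.eval (z : ℂ)‖ := by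
  have hsup : ‖polyT p‖ = ⨆ z : 𝕋, ‖p.eval (z : ℂ)‖ := ContinuousMap.norm_eq_iSup_norm _
  have hN : ‖p.coeff 0 • (1 : Matrix (Fin 2) (Fin 2) ℂ) + p.coeff 1 • N‖ ≤ ‖polyT p‖ :=
    norm_coeff_smul_one_add_coeff_smul_N_le p fun z hz =>
      (polyT p).norm_coe_le_norm ⟨z, mem_sphere_zero_iff_norm.2 hz⟩
  rw [Prod.norm_mk, max_eq_left hN, hsup]

end
end

section
/- The smallest closed unital star-subalgebra of C containing the element a = (z ↦ z, N) is all of C; that is, the topological closure of the star subalgebra of C generated by a equals C. (This is the paper's claim that (C, ι) with ι(z) = a is a C*-cover of the disc algebra, i.e., C*(ι(A(𝔻))) = C.) -/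
noncomputable section

/-! Because `z ↦ z` is normal, `a⋆a - aa⋆ = (0, N⋆N - NN⋆) = (0, diag(1, -1))`, whose square
is `(0, 1)`. Hence the central projections `(1, 0)` and `(0, 1)` lie in the ⋆-algebra generated
by `a`, which therefore splits as the product of the ⋆-algebras generated by `z ↦ z` and by `N`.
The first is dense in `C(𝕋, ℂ)` by Stone–Weierstrass; the second is all of `M₂(ℂ)`, because `N`
is the matrix unit `E₁₀` and `E₀₁ = N⋆`, `E₀₀ = N⋆N`, `E₁₁ = NN⋆`. -/

section ProdClosure

variable {R A B : Type*} [CommRing R] [StarRing R]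
  [TopologicalSpace A] [Ring A] [StarRing A] [Algebra R A] [StarModule R A]
  [IsTopologicalRing A] [ContinuousStar A]
  [TopologicalSpace B] [Ring B] [StarRing B] [Algebra R B] [StarModule R B]
  [IsTopologicalRing B] [ContinuousStar B]

theorem StarSubalgebra.topologicalClosure_eq_top_of_one_zero_mem (S : StarSubalgebra R (A × B))
    (h₁₀ : ((1, 0) : A × B) ∈ S)
    (hA : (S.map (StarAlgHom.fst R A B)).topologicalClosure = ⊤)
    (hB : (S.map (StarAlgHom.snd R A B)).topologicalClosure = ⊤) :
    S.topologicalClosure = ⊤ := by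
  have h₀₁ : ((0, 1) : A × B) ∈ S := by
    have h : (1 : A × B) - (1, 0) = (0, 1) := Prod.ext (sub_self 1) (sub_zero 1)
    exact h ▸ sub_mem (one_mem S) h₁₀
  have hfst : ∀ x : A, ((x, 0) : A × B) ∈ S.topologicalClosure := by
    intro x
    have hx : x ∈ closure (S.map (StarAlgHom.fst R A B) : Set A) := by
      rw [← StarSubalgebra.topologicalClosure_coe, hA]; trivial
    refine map_mem_closure (f := fun x => (x, 0)) (by fun_prop) hx ?_
    rintro _ ⟨y, hy, rfl⟩
    have h : ((1, 0) : A × B) * y = (y.1, 0) := Prod.ext (one_mul _) (zero_mul _)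
    simpa [h] using mul_mem h₁₀ hy
  have hsnd : ∀ x : B, ((0, x) : A × B) ∈ S.topologicalClosure := by
    intro x
    have hx : x ∈ closure (S.map (StarAlgHom.snd R A B) : Set B) := by
      rw [← StarSubalgebra.topologicalClosure_coe, hB]; trivial
    refine map_mem_closure (f := fun x => (0, x)) (by fun_prop) hx ?_
    rintro _ ⟨y, hy, rfl⟩
    have h : ((0, 1) : A × B) * y = (0, y.2) := Prod.ext (zero_mul _) (one_mul _)
    simpa [h] using mul_mem h₀₁ hy
  refine StarSubalgebra.eq_top_iff.2 fun z => ?_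
  have h : ((z.1, 0) : A × B) + (0, z.2) = z := Prod.ext (add_zero _) (zero_add _)
  rw [← h]
  exact add_mem (hfst z.1) (hsnd z.2)

end ProdClosure

theorem Prod.one_zero_mem_adjoin_of_sq_selfCommutator_eq_one {R A B : Type*} [CommRing R]
    [StarRing R] [CommRing A] [StarRing A] [Algebra R A] [StarModule R A]
    [Ring B] [StarRing B] [Algebra R B] [StarModule R B]
    (x : A × B) (hx : (star x.2 * x.2 - x.2 * star x.2) ^ 2 = 1) :
    ((1, 0) : A × B) ∈ StarAlgebra.adjoin R {x} := by
  have hmem := StarAlgebra.self_mem_adjoin_singleton R x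
  have key : (1 : A × B) - (star x * x - x * star x) ^ 2 = (1, 0) := by
    ext
    · simp [mul_comm]
    · simp [hx]
  rw [← key]
  exact sub_mem (one_mem _) (pow_mem (sub_mem (mul_mem (star_mem hmem) hmem)
    (mul_mem hmem (star_mem hmem))) 2)

namespace Matrix

variable {R : Type*} [CommRing R] [StarRing R]

theorem star_single_one_zero : star (single (1 : Fin 2) (0 : Fin 2) (1 : R)) = single 0 1 1 := by
  simp [star_eq_conjTranspose, conjTranspose_single]

theorem sq_selfCommutator_single_one_zero :
    (star (single (1 : Fin 2) (0 : Fin 2) (1 : R)) * single 1 0 1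
      - single 1 0 1 * star (single (1 : Fin 2) (0 : Fin 2) (1 : R))) ^ 2 = 1 := by
  rw [star_single_one_zero]
  ext i j
  fin_cases i <;> fin_cases j <;> simp [sq, mul_apply, single_apply]

theorem adjoin_single_one_zero_eq_top :
    StarAlgebra.adjoin R {single (1 : Fin 2) (0 : Fin 2) (1 : R)} = ⊤ := by
  set S := StarAlgebra.adjoin R {single (1 : Fin 2) (0 : Fin 2) (1 : R)}
  have h₁₀ : single (1 : Fin 2) 0 (1 : R) ∈ S := StarAlgebra.self_mem_adjoin_singleton R _
  have h₀₁ : single (0 : Fin 2) 1 (1 : R) ∈ S := star_single_one_zero (R := R) ▸ star_mem h₁₀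
  have hunit : ∀ i j : Fin 2, single i j (1 : R) ∈ S := by
    intro i j
    fin_cases i <;> fin_cases j
    · simpa [single_mul_single_same] using mul_mem h₀₁ h₁₀
    · exact h₀₁
    · exact h₁₀
    · simpa [single_mul_single_same] using mul_mem h₁₀ h₀₁
  refine eq_top_iff.2 fun m _ => Matrix.induction_on' m (zero_mem S) (fun _ _ => add_mem)
    fun i j x => ?_
  simpa [smul_single] using SMulMemClass.smul_mem x (hunit i j)

end Matrix

theorem N_eq_single : N = Matrix.single 1 0 1 := by
  ext i j
  fin_cases i <;> fin_cases j <;> simp [N]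

/-- The element `a = (z ↦ z, N)` generates `C = C(𝕋, ℂ) × M₂(ℂ)` as a C*-algebra:
the topological closure of the star subalgebra generated by `a` is all of `C`. -/
theorem generates_Cstar :
    (StarAlgebra.adjoin ℂ ({a} : Set CstarCover)).topologicalClosure = ⊤ := by
  apply StarSubalgebra.topologicalClosure_eq_top_of_one_zero_mem
  · refine Prod.one_zero_mem_adjoin_of_sq_selfCommutator_eq_one a ?_
    simpa only [a, N_eq_single] using Matrix.sq_selfCommutator_single_one_zero
  · rw [StarAlgHom.map_adjoin, Set.image_singleton]
    exact ContinuousMap.elemental_id_eq_top 𝕋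
  · rw [StarAlgHom.map_adjoin, Set.image_singleton]
    change (StarAlgebra.adjoin ℂ {N}).topologicalClosure = ⊤
    rw [N_eq_single, Matrix.adjoin_single_one_zero_eq_top]
    exact top_unique (StarSubalgebra.le_topologicalClosure _)

end
end

section
/- The matrix K − K²·Kᴴ equals the 2×2 matrix with rows (−3/8, −3/16) and (3/8, 3/16), and its operator norm (induced by the Euclidean norm on ℂ²) equals 3√10/16, which is strictly less than 1. (This is the quantitative heart of the paper's proof that the stated C*-cover of the disc algebra is not α-admissible: since star-automorphisms are isometric, no automorphism can carry the norm-one element (0, N) to an element of norm 3√10/16.) -/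
/-!
`M := K - K²Kᴴ` is singular, hence so is the positive matrix `P := MᴴM`, and Cayley–Hamilton
gives `P² = (tr P) • P`. The C*-identity `‖P‖ = ‖M‖²` together with `‖P²‖ = ‖P‖²` then forces
`‖M‖² = tr P`, the sum of the squared moduli of the entries of `M`, which is `45/128`.
-/

open scoped Matrix.Norms.L2Operator
open Matrix

noncomputable section

theorem CStarRing.norm_sq_eq_of_star_mul_self_mul_self {𝕜 E : Type*} [NormedField 𝕜]
    [NormedRing E] [StarRing E] [CStarRing E] [NormedSpace 𝕜 E] {x : E} (hx : x ≠ 0) {c : 𝕜}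
    (h : (star x * x) * (star x * x) = c • (star x * x)) : ‖x‖ ^ 2 = ‖c‖ := by
  have hnorm : ‖star x * x‖ = ‖x‖ ^ 2 := by rw [CStarRing.norm_star_mul_self, sq]
  have hnorm_ne : ‖star x * x‖ ≠ 0 := by rw [hnorm]; positivity
  have hmul : ‖star x * x‖ * ‖star x * x‖ = ‖c‖ * ‖star x * x‖ := by
    rw [← sq, ← (IsSelfAdjoint.star_mul_self x).norm_mul_self, h, norm_smul]
  rw [← hnorm]
  exact mul_right_cancel₀ hnorm_ne hmul

theorem Matrix.sq_fin_two_eq_trace_smul_sub_det_smul {R : Type*} [CommRing R]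
    (A : Matrix (Fin 2) (Fin 2) R) : A ^ 2 = A.trace • A - A.det • 1 := by
  ext i j
  fin_cases i <;> fin_cases j <;>
    simp [sq, mul_apply, trace_fin_two, det_fin_two] <;> ring

theorem Matrix.l2_opNorm_sq_eq_norm_trace_of_det_eq_zero {𝕜 : Type*} [RCLike 𝕜]
    {A : Matrix (Fin 2) (Fin 2) 𝕜} (hA : A.det = 0) : ‖A‖ ^ 2 = ‖(Aᴴ * A).trace‖ := by
  rcases eq_or_ne A 0 with rfl | hA_ne
  · simp
  refine CStarRing.norm_sq_eq_of_star_mul_self_mul_self hA_ne ?_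
  have hdet : (star A * A).det = 0 := by simp [det_mul, hA]
  rw [← sq, sq_fin_two_eq_trace_smul_sub_det_smul, hdet, zero_smul, sub_zero,
    star_eq_conjTranspose]

theorem K_sub_K_sq_mul_conjTranspose :
    K - K ^ 2 * Kᴴ = !![-(3/8), -(3/16); 3/8, 3/16] := by
  have hK_conj : Kᴴ = !![-(1/2), 3/4; 0, -(1/2)] := by
    ext i j
    fin_cases i <;> fin_cases j <;> simp [K]
  rw [hK_conj, K, sq, mul_fin_two, mul_fin_two]
  ext i j
  fin_cases i <;> fin_cases j <;> norm_num

/-- The quantitative heart of the paper's proof: `K - K²·Kᴴ` equals the matrix with rows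
`(-3/8, -3/16)` and `(3/8, 3/16)`, its operator norm (induced by the Euclidean norm on `ℂ²`)
is `3√10/16`, and `3√10/16 < 1`. -/
theorem K_computation :
    K - K ^ 2 * Kᴴ = !![-(3/8), -(3/16); 3/8, 3/16] ∧
      ‖K - K ^ 2 * Kᴴ‖ = 3 * Real.sqrt 10 / 16 ∧
      3 * Real.sqrt 10 / 16 < 1 := by
  have hM := K_sub_K_sq_mul_conjTranspose
  have hnorm_sq : ‖K - K ^ 2 * Kᴴ‖ ^ 2 = 45 / 128 := by
    rw [hM, l2_opNorm_sq_eq_norm_trace_of_det_eq_zero (by norm_num [det_fin_two])]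
    simp only [trace_fin_two, mul_apply, conjTranspose_apply, Fin.sum_univ_two]
    norm_num [map_div₀, map_ofNat]
  have hbound_sq : (3 * Real.sqrt 10 / 16) ^ 2 = 45 / 128 := by
    rw [div_pow, mul_pow, Real.sq_sqrt (by norm_num)]
    norm_num
  refine ⟨hM, ?_, ?_⟩
  · exact (pow_left_inj₀ (norm_nonneg _) (by positivity) two_ne_zero).1
      (hnorm_sq.trans hbound_sq.symm)
  · exact (sq_lt_one_iff₀ (by positivity)).1 (by rw [hbound_sq]; norm_num)

end
end
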